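/- For every weighted digraph and every τ > 0, the normalized matrix of out forests is the following polynomial in the Kirchhoff matrix: Q(τ) = (I + τL)^{−1} = s(τ)^{−1} Σ_{i=0}^{n−v} s_{n−v−i}(τ)·(−τL)^i, where s_k(τ) = Σ_{j=0}^{k} τ^j σ_j and s(τ) = s_{n−v}(τ). In particular, for τ = 1: (I + L)^{−1} = s^{−1} Σ_{i=0}^{n−v} s_{n−v−i}·(−L)^i, where s_k = Σ_{j=0}^{k} σ_j is the total weight of out forests with at most k arcs and s = s_{n−v}. -/

import Mathlib

open Matrix BigOperators Filter

/-- An out forest of the weighted digraph with arc-weight matrix `ε`: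
a set of arcs (pairs with positive weight), every vertex has at most one
incoming arc, and there is no directed cycle. -/
def IsOutForest {n : ℕ} (ε : Fin n → Fin n → ℝ) (F : Finset (Fin n × Fin n)) : Prop :=
  (∀ p ∈ F, 0 < ε p.1 p.2) ∧
  (∀ u u' v : Fin n, (u, v) ∈ F → (u', v) ∈ F → u = u') ∧
  ¬ ∃ (k : ℕ) (f : ℕ → Fin n), 0 < k ∧ f 0 = f k ∧ ∀ i < k, (f i, f (i + 1)) ∈ F

/-- The weight of a forest: the product of the weights of its arcs. -/
noncomputable def forestWeight {n : ℕ} (ε : Fin n → Fin n → ℝ)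
    (F : Finset (Fin n × Fin n)) : ℝ :=
  ∏ p ∈ F, ε p.1 p.2

/-- `σ_k`: the total weight of the out forests with exactly `k` arcs. -/
noncomputable def sigmaW {n : ℕ} (ε : Fin n → Fin n → ℝ) (k : ℕ) : ℝ :=
  ∑ᶠ F ∈ {F : Finset (Fin n × Fin n) | IsOutForest ε F ∧ F.card = k}, forestWeight ε F

/-- `Q_k`: the matrix whose `(i,j)` entry is the total weight of out forests with `k`
arcs in which `j` has no incoming arc and `i` is reachable from `j` along arcs of `F`. -/
noncomputable def QMat {n : ℕ} (ε : Fin n → Fin n → ℝ) (k : ℕ) :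
    Matrix (Fin n) (Fin n) ℝ :=
  Matrix.of fun i j =>
    ∑ᶠ F ∈ {F : Finset (Fin n × Fin n) | IsOutForest ε F ∧ F.card = k ∧
        (∀ u, (u, j) ∉ F) ∧ Relation.ReflTransGen (fun a b => (a, b) ∈ F) j i},
      forestWeight ε F

/-- `n − v`: the maximum number of arcs in an out forest. -/
noncomputable def maxForestCard {n : ℕ} (ε : Fin n → Fin n → ℝ) : ℕ :=
  sSup {k | ∃ F : Finset (Fin n × Fin n), IsOutForest ε F ∧ F.card = k}

/-- The Kirchhoff matrix: `l i j = -ε j i` for `j ≠ i`, `l i i = Σ_{k ≠ i} ε k i`. -/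
noncomputable def kirchhoff {n : ℕ} (ε : Fin n → Fin n → ℝ) : Matrix (Fin n) (Fin n) ℝ :=
  Matrix.of fun i j =>
    if i = j then ∑ k ∈ Finset.univ.filter (· ≠ i), ε k i else -(ε j i)

/-- The normalized matrix of maximum out forests `J̄ = σ_{n−v}⁻¹ Q_{n−v}`. -/
noncomputable def Jbar {n : ℕ} (ε : Fin n → Fin n → ℝ) : Matrix (Fin n) (Fin n) ℝ :=
  (sigmaW ε (maxForestCard ε))⁻¹ • QMat ε (maxForestCard ε)

set_option linter.unusedSectionVars false

section FPsec
namespace FP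

variable {n : ℕ}

abbrev Arcs (n : ℕ) := Finset (Fin n × Fin n)

def rel (F : Arcs n) : Fin n → Fin n → Prop := fun a b => (a, b) ∈ F

local notation "RTG" => Relation.ReflTransGen
local notation "TG" => Relation.TransGen

lemma rtg_mono {F G : Arcs n} (h : F ⊆ G) {a b : Fin n}
    (hab : RTG (rel F) a b) : RTG (rel G) a b :=
  Relation.ReflTransGen.mono (fun _ _ hxy => h hxy) a b hab

lemma rtg_insert {F : Arcs n} {p i a b : Fin n}
    (h : RTG (rel (insert (p, i) F)) a b) :
    RTG (rel F) a b ∨ (RTG (rel F) a p ∧ RTG (rel (insert (p, i) F)) i b) := by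
  induction h with
  | refl => exact Or.inl .refl
  | @tail c d h1 h2 ih =>
    rcases Finset.mem_insert.mp h2 with he | hF
    · obtain ⟨hc, hd⟩ := Prod.mk.injEq .. ▸ he
      subst hc; subst hd
      rcases ih with h' | ⟨h1', _⟩
      · exact Or.inr ⟨h', .refl⟩
      · exact Or.inr ⟨h1', .refl⟩
    · rcases ih with h' | ⟨h1', h2'⟩
      · exact Or.inl (h'.tail hF)
      · exact Or.inr ⟨h1', h2'.tail (Finset.mem_insert_of_mem hF)⟩

lemma rtg_insert' {F : Arcs n} {p i a b : Fin n}
    (hnp : ¬ RTG (rel F) i p) (h : RTG (rel (insert (p, i) F)) a b) :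
    RTG (rel F) a b ∨ (RTG (rel F) a p ∧ RTG (rel F) i b) := by
  rcases rtg_insert h with h' | ⟨h1, h2⟩
  · exact Or.inl h'
  · refine Or.inr ⟨h1, ?_⟩
    rcases rtg_insert h2 with h' | ⟨h1', _⟩
    · exact h'
    · exact absurd h1' hnp

lemma acyc_insert {F : Arcs n} {p i : Fin n}
    (hac : ∀ a, ¬ TG (rel F) a a) (hnp : ¬ RTG (rel F) i p) :
    ∀ a, ¬ TG (rel (insert (p, i) F)) a a := by
  intro a h
  obtain ⟨c, hrtg, harc⟩ := Relation.TransGen.tail'_iff.mp h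
  rcases Finset.mem_insert.mp harc with he | hF
  · obtain ⟨hc, ha⟩ := Prod.mk.injEq .. ▸ he
    subst hc; subst ha
    rcases rtg_insert' hnp hrtg with h' | ⟨h1, _⟩
    · exact hnp h'
    · exact hnp h1
  · rcases rtg_insert' hnp hrtg with h' | ⟨h1, h2⟩
    · exact hac a (Relation.TransGen.tail' h' hF)
    · exact hnp ((h2.tail hF).trans h1)

lemma rtg_comparable {F : Arcs n}
    (huniq : ∀ u u' v : Fin n, (u, v) ∈ F → (u', v) ∈ F → u = u')
    {i j : Fin n} : ∀ {p}, RTG (rel F) j p → RTG (rel F) i p →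
      RTG (rel F) i j ∨ RTG (rel F) j i := by
  intro p hjp
  induction hjp with
  | refl => exact fun hij => Or.inl hij
  | @tail b c h1 h2 ih =>
    intro hic
    rcases Relation.ReflTransGen.cases_tail hic with hec | ⟨b', hib', hb'c⟩
    · exact Or.inr (hec ▸ (h1.tail h2))
    · have hbb : b' = b := huniq _ _ _ hb'c h2
      exact ih (hbb ▸ hib')

lemma rtg_no_incoming {F : Arcs n} {i : Fin n} (h : ∀ u, (u, i) ∉ F)
    {j : Fin n} (hji : RTG (rel F) j i) : j = i := by
  rcases Relation.ReflTransGen.cases_tail hji with he | ⟨c, _, hc⟩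
  · exact he.symm
  · exact absurd hc (h c)

def HasCycle (F : Arcs n) : Prop :=
  ∃ (k : ℕ) (f : ℕ → Fin n), 0 < k ∧ f 0 = f k ∧ ∀ i < k, (f i, f (i + 1)) ∈ F

lemma tg_to_chain {F : Arcs n} {a b : Fin n} (h : TG (rel F) a b) :
    ∃ (k : ℕ) (f : ℕ → Fin n), 0 < k ∧ f 0 = a ∧ f k = b ∧ ∀ i < k, (f i, f (i + 1)) ∈ F := by
  induction h with
  | @single c h =>
    refine ⟨1, fun m => if m = 0 then a else c, one_pos, if_pos rfl, if_neg one_ne_zero, ?_⟩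
    intro i hi
    interval_cases i
    simpa [rel] using h
  | @tail b c h1 h2 ih =>
    obtain ⟨k, f, hk, h0, hkb, hmem⟩ := ih
    refine ⟨k + 1, fun m => if m ≤ k then f m else c, Nat.succ_pos k, ?_, ?_, ?_⟩
    · simpa using h0
    · simp [Nat.not_le.mpr (Nat.lt_succ_self k)]
    · intro i hi
      rcases Nat.lt_succ_iff_lt_or_eq.mp hi with hik | rfl
      · have h1' : i ≤ k := le_of_lt hik
        have h2' : i + 1 ≤ k := hik
        simp only [if_pos h1', if_pos h2']
        exact hmem i hik
      · simp only [le_refl, if_pos, if_neg (by omega : ¬ i + 1 ≤ i), hkb]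
        exact h2

lemma rtg_chain {F : Arcs n} (f : ℕ → Fin n) :
    ∀ k, (∀ i < k, (f i, f (i + 1)) ∈ F) → RTG (rel F) (f 0) (f k) := by
  intro k
  induction k with
  | zero => exact fun _ => .refl
  | succ k ih =>
    intro h
    exact (ih fun i hi => h i (Nat.lt_succ_of_lt hi)).tail (h k (Nat.lt_succ_self k))

lemma hasCycle_iff {F : Arcs n} : HasCycle F ↔ ∃ a, TG (rel F) a a := by
  constructor
  · rintro ⟨k, f, hk, h0, hmem⟩
    obtain ⟨k, rfl⟩ : ∃ k', k = k' + 1 := ⟨k - 1, (Nat.succ_pred_eq_of_pos hk).symm⟩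
    refine ⟨f 0, Relation.TransGen.tail'
      (rtg_chain f k fun i hi => hmem i (Nat.lt_succ_of_lt hi)) ?_⟩
    show (f k, f 0) ∈ F
    rw [h0]
    exact hmem k (Nat.lt_succ_self k)
  · rintro ⟨a, h⟩
    obtain ⟨k, f, hk, h0, hkb, hmem⟩ := tg_to_chain h
    exact ⟨k, f, hk, by rw [h0, hkb], hmem⟩

variable {ε : Fin n → Fin n → ℝ}

lemma forest_acyc {F : Arcs n} (hF : IsOutForest ε F) : ∀ a, ¬ TG (rel F) a a :=
  fun a ha => hF.2.2 (hasCycle_iff.mpr ⟨a, ha⟩)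

lemma isOutForest_subset {F G : Arcs n} (hF : IsOutForest ε F) (hGF : G ⊆ F) :
    IsOutForest ε G :=
  ⟨fun p hp => hF.1 p (hGF hp), fun u u' v hu hu' => hF.2.1 u u' v (hGF hu) (hGF hu'),
   fun ⟨k, f, hk, h0, hm⟩ => hF.2.2 ⟨k, f, hk, h0, fun i hi => hGF (hm i hi)⟩⟩

lemma isOutForest_empty : IsOutForest ε (∅ : Arcs n) :=
  ⟨by simp, by simp, fun ⟨k, f, hk, _, hm⟩ => by simpa using hm 0 hk⟩

lemma isOutForest_insert {F : Arcs n} (hF : IsOutForest ε F) {p v : Fin n}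
    (hpv : 0 < ε p v) (hno : ∀ u, (u, v) ∉ F) (hnr : ¬ RTG (rel F) v p) :
    IsOutForest ε (insert (p, v) F) := by
  refine ⟨?_, ?_, ?_⟩
  · intro q hq
    rcases Finset.mem_insert.mp hq with h | h
    · subst h; exact hpv
    · exact hF.1 q h
  · intro u u' w hu hu'
    rcases Finset.mem_insert.mp hu with h | h <;> rcases Finset.mem_insert.mp hu' with h' | h'
    · obtain ⟨h1, _⟩ := Prod.mk.injEq .. ▸ h
      obtain ⟨h1', _⟩ := Prod.mk.injEq .. ▸ h'
      rw [h1, h1']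
    · obtain ⟨_, h2⟩ := Prod.mk.injEq .. ▸ h
      subst h2
      exact absurd h' (hno u')
    · obtain ⟨_, h2⟩ := Prod.mk.injEq .. ▸ h'
      subst h2
      exact absurd h (hno u)
    · exact hF.2.1 u u' w h h'
  · intro hc
    obtain ⟨a, ha⟩ := hasCycle_iff.mp hc
    exact acyc_insert (forest_acyc hF) hnr a ha

lemma exists_incoming {F : Arcs n} {i j : Fin n} (hji : RTG (rel F) j i) (hij : i ≠ j) :
    ∃ u, (u, i) ∈ F := by
  rcases Relation.ReflTransGen.cases_tail hji with he | ⟨c, _, hc⟩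
  · exact absurd he hij
  · exact ⟨c, hc⟩

lemma forest_existsUnique_incoming {F : Arcs n} (hF : IsOutForest ε F) {i : Fin n}
    (h : ∃ u, (u, i) ∈ F) : ∃! u, (u, i) ∈ F := by
  obtain ⟨u, hu⟩ := h
  exact ⟨u, hu, fun y hy => hF.2.1 y u i hy hu⟩

lemma forestWeight_pos {F : Arcs n} (hF : IsOutForest ε F) : 0 < forestWeight ε F :=
  Finset.prod_pos (fun p hp => hF.1 p hp)

lemma arc_pos {F : Arcs n} (hF : IsOutForest ε F) {p v : Fin n} (h : (p, v) ∈ F) :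
    0 < ε p v := hF.1 (p, v) h

lemma arc_ne {F : Arcs n} (hd : ∀ i, ε i i = 0) (hF : IsOutForest ε F) {p v : Fin n}
    (h : (p, v) ∈ F) : p ≠ v := by
  intro hpv
  subst hpv
  exact absurd (hd p) (ne_of_gt (arc_pos hF h))

section Sums

open Finset

lemma finsum_mem_eq (S : Set (Arcs n)) (f : Arcs n → ℝ) :
    ∑ᶠ F ∈ S, f F = ∑ F ∈ S.toFinite.toFinset, f F := by
  rw [← finsum_mem_coe_finset, Set.Finite.coe_toFinset]

noncomputable def wsum (ε : Fin n → Fin n → ℝ) (S : Set (Arcs n)) : ℝ :=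
  ∑ F ∈ S.toFinite.toFinset, forestWeight ε F

noncomputable def wsumP (ε : Fin n → Fin n → ℝ) (v : Fin n) (S : Set (Fin n × Arcs n)) : ℝ :=
  ∑ x ∈ S.toFinite.toFinset, ε x.1 v * forestWeight ε x.2

noncomputable def wsumPP (ε : Fin n → Fin n → ℝ) (v : Fin n) (S : Set (Fin n × Fin n × Arcs n)) : ℝ :=
  ∑ x ∈ S.toFinite.toFinset, ε x.1 v * (ε x.2.1 v * forestWeight ε x.2.2)

variable (ε : Fin n → Fin n → ℝ)

lemma wsum_congr {S T : Set (Arcs n)} (h : S = T) : wsum ε S = wsum ε T := by rw [h]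

lemma wsumP_congr {v : Fin n} {S T : Set (Fin n × Arcs n)} (h : S = T) :
    wsumP ε v S = wsumP ε v T := by rw [h]

lemma wsum_split (S : Set (Arcs n)) (P : Arcs n → Prop) :
    wsum ε S = wsum ε {F | F ∈ S ∧ P F} + wsum ε {F | F ∈ S ∧ ¬ P F} := by
  classical
  have h1 : ({F | F ∈ S ∧ P F} : Set (Arcs n)).toFinite.toFinset
      = S.toFinite.toFinset.filter P := by
    ext F; simp [Set.Finite.mem_toFinset, Set.mem_setOf_eq]
  have h2 : ({F | F ∈ S ∧ ¬ P F} : Set (Arcs n)).toFinite.toFinset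
      = S.toFinite.toFinset.filter (fun F => ¬ P F) := by
    ext F; simp [Set.Finite.mem_toFinset, Set.mem_setOf_eq]
  unfold wsum
  rw [h1, h2, Finset.sum_filter_add_sum_filter_not]

lemma wsum_empty : wsum ε (∅ : Set (Arcs n)) = 0 := by
  unfold wsum
  apply Finset.sum_eq_zero
  intro x hx
  rw [Set.Finite.mem_toFinset] at hx
  exact (Set.notMem_empty x hx).elim

lemma wsum_nonneg (S : Set (Arcs n)) (hS : ∀ F ∈ S, IsOutForest ε F) : 0 ≤ wsum ε S := by
  unfold wsum
  apply Finset.sum_nonneg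
  intro F hF
  exact le_of_lt (forestWeight_pos (hS F (S.toFinite.mem_toFinset.mp hF)))

lemma wsum_singleton_empty : wsum ε ({(∅ : Arcs n)} : Set (Arcs n)) = 1 := by
  unfold wsum
  have h : (({(∅ : Arcs n)} : Set (Arcs n))).toFinite.toFinset = {(∅ : Arcs n)} := by
    ext F; simp [Set.Finite.mem_toFinset]
  rw [h, Finset.sum_singleton]
  simp [forestWeight]

variable [NeZero n]

noncomputable def par (v : Fin n) (F : Arcs n) : Fin n :=
  if h : ∃ u, (u, v) ∈ F then h.choose else default

lemma par_mem {v : Fin n} {F : Arcs n} (h : ∃ u, (u, v) ∈ F) : (par v F, v) ∈ F := by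
  unfold par
  rw [dif_pos h]
  exact h.choose_spec

lemma wsum_remove (v : Fin n) (S : Set (Arcs n))
    (hS : ∀ F ∈ S, ∃! u : Fin n, (u, v) ∈ F) :
    wsum ε S = wsumP ε v {x | (∀ u, (u, v) ∉ x.2) ∧ insert (x.1, v) x.2 ∈ S} := by
  classical
  unfold wsum wsumP
  refine Finset.sum_nbij' (i := fun F => (par v F, F.erase (par v F, v)))
    (j := fun x => insert (x.1, v) x.2) ?_ ?_ ?_ ?_ ?_
  · intro F hF
    rw [Set.Finite.mem_toFinset] at hF ⊢
    obtain ⟨u, hu, huniq⟩ := hS F hF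
    have hex : ∃ u, (u, v) ∈ F := ⟨u, hu⟩
    have hpm : (par v F, v) ∈ F := par_mem hex
    constructor
    · intro w hw
      have hw' : (w, v) ∈ F := Finset.mem_of_mem_erase hw
      have : w = par v F := (huniq w hw').trans (huniq (par v F) hpm).symm
      exact (Finset.ne_of_mem_erase hw) (by rw [this])
    · simpa [Finset.insert_erase hpm] using hF
  · intro x hx
    rw [Set.Finite.mem_toFinset] at hx ⊢
    exact hx.2
  · intro F hF
    rw [Set.Finite.mem_toFinset] at hF
    obtain ⟨u, hu, huniq⟩ := hS F hF
    exact Finset.insert_erase (par_mem ⟨u, hu⟩)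
  · intro x hx
    rw [Set.Finite.mem_toFinset] at hx
    obtain ⟨hno, _⟩ := hx
    have hex : ∃ u, (u, v) ∈ insert (x.1, v) x.2 := ⟨x.1, Finset.mem_insert_self _ _⟩
    have hpm := par_mem hex
    have hp1 : par v (insert (x.1, v) x.2) = x.1 := by
      rcases Finset.mem_insert.mp hpm with h | h
      · exact (Prod.ext_iff.mp h).1
      · exact absurd h (hno _)
    show (par v (insert (x.1, v) x.2),
      (insert (x.1, v) x.2).erase (par v (insert (x.1, v) x.2), v)) = x
    rw [hp1, Finset.erase_insert (fun h => hno x.1 h)]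
  · intro F hF
    rw [Set.Finite.mem_toFinset] at hF
    obtain ⟨u, hu, huniq⟩ := hS F hF
    exact (Finset.mul_prod_erase F _ (par_mem ⟨u, hu⟩)).symm

lemma wsumP_remove (v : Fin n) (S : Set (Fin n × Arcs n))
    (hS : ∀ x ∈ S, ∃! u : Fin n, (u, v) ∈ x.2) :
    wsumP ε v S = wsumPP ε v
      {y | (∀ u, (u, v) ∉ y.2.2) ∧ (y.1, insert (y.2.1, v) y.2.2) ∈ S} := by
  classical
  unfold wsumP wsumPP
  refine Finset.sum_nbij' (i := fun x => (x.1, par v x.2, x.2.erase (par v x.2, v)))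
    (j := fun y => (y.1, insert (y.2.1, v) y.2.2)) ?_ ?_ ?_ ?_ ?_
  · intro x hx
    rw [Set.Finite.mem_toFinset] at hx ⊢
    obtain ⟨u, hu, huniq⟩ := hS x hx
    have hpm : (par v x.2, v) ∈ x.2 := par_mem ⟨u, hu⟩
    constructor
    · intro w hw
      have hw' : (w, v) ∈ x.2 := Finset.mem_of_mem_erase hw
      have : w = par v x.2 := (huniq w hw').trans (huniq (par v x.2) hpm).symm
      exact (Finset.ne_of_mem_erase hw) (by rw [this])
    · simpa [Finset.insert_erase hpm] using hx
  · intro y hy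
    rw [Set.Finite.mem_toFinset] at hy ⊢
    exact hy.2
  · intro x hx
    rw [Set.Finite.mem_toFinset] at hx
    obtain ⟨u, hu, huniq⟩ := hS x hx
    have := Finset.insert_erase (par_mem (⟨u, hu⟩ : ∃ u, (u, v) ∈ x.2))
    simp only [this]
  · intro y hy
    rw [Set.Finite.mem_toFinset] at hy
    obtain ⟨hno, _⟩ := hy
    have hex : ∃ u, (u, v) ∈ insert (y.2.1, v) y.2.2 := ⟨y.2.1, Finset.mem_insert_self _ _⟩
    have hpm := par_mem hex
    have hp1 : par v (insert (y.2.1, v) y.2.2) = y.2.1 := by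
      rcases Finset.mem_insert.mp hpm with h | h
      · exact (Prod.ext_iff.mp h).1
      · exact absurd h (hno _)
    have h2 : (insert (y.2.1, v) y.2.2).erase (y.2.1, v) = y.2.2 :=
      Finset.erase_insert (fun h => hno y.2.1 h)
    simp only [hp1, h2]
  · intro x hx
    rw [Set.Finite.mem_toFinset] at hx
    obtain ⟨u, hu, huniq⟩ := hS x hx
    have hh := (Finset.mul_prod_erase x.2 (fun p => ε p.1 p.2)
      (par_mem (⟨u, hu⟩ : ∃ u, (u, v) ∈ x.2))).symm
    show ε x.1 v * forestWeight ε x.2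
      = ε x.1 v * (ε (par v x.2) v * forestWeight ε (x.2.erase (par v x.2, v)))
    exact congrArg (fun t => ε x.1 v * t) hh

lemma wsumPP_swap (v : Fin n) (S : Set (Fin n × Fin n × Arcs n)) :
    wsumPP ε v S = wsumPP ε v {y | (y.2.1, y.1, y.2.2) ∈ S} := by
  classical
  unfold wsumPP
  refine Finset.sum_nbij' (i := fun y => (y.2.1, y.1, y.2.2))
    (j := fun y => (y.2.1, y.1, y.2.2)) ?_ ?_ ?_ ?_ ?_
  · intro y hy; rw [Set.Finite.mem_toFinset] at hy ⊢; exact hy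
  · intro y hy; rw [Set.Finite.mem_toFinset] at hy ⊢; exact hy
  · intro y _; rfl
  · intro y _; rfl
  · intro y _; ring

lemma sum_wsum_eq_wsumP (v : Fin n) (P : Fin n → Prop) [DecidablePred P]
    (T : Fin n → Set (Arcs n)) :
    ∑ p ∈ Finset.univ.filter (fun p => P p), ε p v * wsum ε (T p)
      = wsumP ε v {x | P x.1 ∧ x.2 ∈ T x.1} := by
  classical
  unfold wsum wsumP
  have h1 : ∀ p ∈ Finset.univ.filter (fun p => P p),
      ε p v * ∑ F ∈ (T p).toFinite.toFinset, forestWeight ε F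
        = ∑ F ∈ (T p).toFinite.toFinset, ε p v * forestWeight ε F := fun p _ =>
    Finset.mul_sum _ _ _
  rw [Finset.sum_congr rfl h1, Finset.sum_sigma' (Finset.univ.filter (fun p => P p))
    (fun p => (T p).toFinite.toFinset) (fun p F => ε p v * forestWeight ε F)]
  refine Finset.sum_nbij' (i := fun x => (x.1, x.2)) (j := fun x => ⟨x.1, x.2⟩) ?_ ?_ ?_ ?_ ?_
  · intro x hx
    rw [Finset.mem_sigma] at hx
    rw [Set.Finite.mem_toFinset]
    refine ⟨by simpa using hx.1, by simpa [Set.Finite.mem_toFinset] using hx.2⟩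
  · intro x hx
    rw [Set.Finite.mem_toFinset] at hx
    rw [Finset.mem_sigma]
    exact ⟨by simpa using hx.1, by simpa [Set.Finite.mem_toFinset] using hx.2⟩
  · intro x _; rfl
  · intro x _; rfl
  · intro x _; rfl

lemma wsumP_pos_trim (hnn : ∀ i j, 0 ≤ ε i j) (v : Fin n) (S : Set (Fin n × Arcs n)) :
    wsumP ε v S = wsumP ε v {x | x ∈ S ∧ 0 < ε x.1 v} := by
  classical
  unfold wsumP
  symm
  apply Finset.sum_subset
  · intro x hx
    rw [Set.Finite.mem_toFinset] at hx ⊢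
    exact hx.1
  · intro x hx hnx
    rw [Set.Finite.mem_toFinset] at hx
    rw [Set.Finite.mem_toFinset] at hnx
    have : ¬ 0 < ε x.1 v := fun h => hnx ⟨hx, h⟩
    have h0 : ε x.1 v = 0 := le_antisymm (not_lt.mp this) (hnn _ _)
    rw [h0, zero_mul]

end Sums

section Forests

variable (ε : Fin n → Fin n → ℝ)

def Qset (k : ℕ) (i j : Fin n) : Set (Arcs n) :=
  {F | IsOutForest ε F ∧ F.card = k ∧ (∀ u, (u, j) ∉ F) ∧ RTG (rel F) j i}

def Fset (k : ℕ) : Set (Arcs n) := {F | IsOutForest ε F ∧ F.card = k}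

lemma E1 (k : ℕ) (p i j : Fin n) :
    {F | F ∈ Qset ε k p j ∧ RTG (rel F) j i}
      = {F | F ∈ Qset ε k i j ∧ RTG (rel F) j p} := by
  ext F
  simp only [Set.mem_setOf_eq, Qset]
  tauto

lemma E2 (k : ℕ) (p j : Fin n) :
    {F | F ∈ Qset ε k j j ∧ RTG (rel F) j p} = Qset ε k p j := by
  ext F
  simp only [Set.mem_setOf_eq, Qset]
  constructor
  · rintro ⟨⟨h1, h2, h3, -⟩, h5⟩
    exact ⟨h1, h2, h3, h5⟩
  · rintro ⟨h1, h2, h3, h4⟩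
    exact ⟨⟨h1, h2, h3, .refl⟩, h4⟩

lemma E3 (k : ℕ) (j : Fin n) :
    {F | F ∈ Fset ε k ∧ (∀ u, (u, j) ∉ F)} = Qset ε k j j := by
  ext F
  simp only [Set.mem_setOf_eq, Qset, Fset]
  constructor
  · rintro ⟨⟨h1, h2⟩, h3⟩
    exact ⟨h1, h2, h3, .refl⟩
  · rintro ⟨h1, h2, h3, -⟩
    exact ⟨⟨h1, h2⟩, h3⟩

variable {ε}

lemma E4 (hd : ∀ a, ε a a = 0) (k : ℕ) (j : Fin n) :
    {x : Fin n × Arcs n | (∀ u, (u, j) ∉ x.2) ∧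
        insert (x.1, j) x.2 ∈ {F | F ∈ Fset ε (k + 1) ∧ ¬ (∀ u, (u, j) ∉ F)}}
      = {x : Fin n × Arcs n |
          x ∈ {x : Fin n × Arcs n | x.1 ≠ j ∧
            x.2 ∈ {F | F ∈ Qset ε k j j ∧ ¬ RTG (rel F) j x.1}} ∧ 0 < ε x.1 j} := by
  ext ⟨p, H⟩
  simp only [Set.mem_setOf_eq, Qset, Fset]
  constructor
  · rintro ⟨hno, ⟨hFor, hcard⟩, -⟩
    have hmemF : (p, j) ∈ insert (p, j) H := Finset.mem_insert_self _ _
    have hpos := arc_pos hFor hmemF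
    have hpj : p ≠ j := arc_ne hd hFor hmemF
    have hHsub : H ⊆ insert (p, j) H := Finset.subset_insert _ _
    have hH : IsOutForest ε H := isOutForest_subset hFor hHsub
    have hcardH : H.card = k := by
      have := Finset.card_insert_of_notMem (hno p)
      omega
    have hnr : ¬ RTG (rel H) j p := fun hr =>
      forest_acyc hFor j (Relation.TransGen.tail' (rtg_mono hHsub hr) hmemF)
    exact ⟨⟨hpj, ⟨hH, hcardH, hno, .refl⟩, hnr⟩, hpos⟩
  · rintro ⟨⟨hpj, ⟨hH, hcardH, hno, -⟩, hnr⟩, hpos⟩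
    have hF := isOutForest_insert hH hpos hno hnr
    refine ⟨hno, ⟨hF, ?_⟩, ?_⟩
    · rw [Finset.card_insert_of_notMem (hno p), hcardH]
    · push_neg
      exact ⟨p, Finset.mem_insert_self _ _⟩

lemma E5 (hd : ∀ a, ε a a = 0) (k : ℕ) {i j : Fin n} (hij : i ≠ j) :
    {x : Fin n × Arcs n | (∀ u, (u, i) ∉ x.2) ∧ insert (x.1, i) x.2 ∈ Qset ε (k + 1) i j}
      = {x : Fin n × Arcs n |
          x ∈ {x : Fin n × Arcs n | x.1 ≠ i ∧
            x.2 ∈ {F | (F ∈ Qset ε k x.1 j ∧ ¬ RTG (rel F) j i) ∧ (∀ u, (u, i) ∉ F)}}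
          ∧ 0 < ε x.1 i} := by
  ext ⟨p, H⟩
  simp only [Set.mem_setOf_eq, Qset]
  constructor
  · rintro ⟨hno, hFor, hcard, hroot, hreach⟩
    have hmemF : (p, i) ∈ insert (p, i) H := Finset.mem_insert_self _ _
    have hpos := arc_pos hFor hmemF
    have hpi : p ≠ i := arc_ne hd hFor hmemF
    have hHsub : H ⊆ insert (p, i) H := Finset.subset_insert _ _
    have hH : IsOutForest ε H := isOutForest_subset hFor hHsub
    have hcardH : H.card = k := by
      have := Finset.card_insert_of_notMem (hno p)
      omega
    have hrootjH : ∀ u, (u, j) ∉ H := fun u hu => hroot u (hHsub hu)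
    have hnji : ¬ RTG (rel H) j i := fun hr => hij (rtg_no_incoming hno hr).symm
    have hjp : RTG (rel H) j p := by
      rcases Relation.ReflTransGen.cases_tail hreach with he | ⟨c, hjc, hci⟩
      · exact absurd he hij
      · have hc : c = p := by
          rcases Finset.mem_insert.mp hci with h | h
          · exact (Prod.ext_iff.mp h).1
          · exact absurd h (hno c)
        subst hc
        rcases rtg_insert hjc with h | ⟨h, -⟩ <;> exact h
    exact ⟨⟨hpi, ⟨⟨hH, hcardH, hrootjH, hjp⟩, hnji⟩, hno⟩, hpos⟩
  · rintro ⟨⟨hpi, ⟨⟨hH, hcardH, hrootjH, hjp⟩, hnji⟩, hno⟩, hpos⟩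
    have hnip : ¬ RTG (rel H) i p := by
      intro hip
      rcases rtg_comparable hH.2.1 hjp hip with h | h
      · exact hij (rtg_no_incoming hrootjH h)
      · exact hnji h
    have hF := isOutForest_insert hH hpos hno hnip
    refine ⟨hno, hF, ?_, ?_, ?_⟩
    · rw [Finset.card_insert_of_notMem (hno p), hcardH]
    · intro u hu
      rcases Finset.mem_insert.mp hu with h | h
      · exact hij (Prod.ext_iff.mp h).2.symm
      · exact hrootjH u h
    · exact (rtg_mono (Finset.subset_insert _ _) hjp).tail (Finset.mem_insert_self _ _)

lemma E8 (hd : ∀ a, ε a a = 0) (k : ℕ) {i j : Fin n} (hij : i ≠ j) :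
    {y : Fin n × Fin n × Arcs n | (y.2.1, y.1, y.2.2) ∈
      {y' : Fin n × Fin n × Arcs n | (∀ u, (u, i) ∉ y'.2.2) ∧
        (y'.1, insert (y'.2.1, i) y'.2.2) ∈
          {x : Fin n × Arcs n |
            x ∈ {x : Fin n × Arcs n | x.1 ≠ i ∧
              x.2 ∈ {F | (F ∈ Qset ε k x.1 j ∧ ¬ RTG (rel F) j i) ∧ ¬ (∀ u, (u, i) ∉ F)}}
            ∧ 0 < ε x.1 i}}}
    = {y : Fin n × Fin n × Arcs n | (∀ u, (u, i) ∉ y.2.2) ∧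
        (y.1, insert (y.2.1, i) y.2.2) ∈
          {x : Fin n × Arcs n |
            x ∈ {x : Fin n × Arcs n | x.1 ≠ i ∧
              x.2 ∈ {F | F ∈ Qset ε k i j ∧ ¬ RTG (rel F) j x.1}}
            ∧ 0 < ε x.1 i}} := by
  ext ⟨a, b, H⟩
  simp only [Set.mem_setOf_eq, Qset]
  constructor
  · rintro ⟨hnoH, ⟨hbi, ⟨⟨hF'for, hF'card, hF'rootj, hjb⟩, hnji⟩, -⟩, hposb⟩
    have hmem : (a, i) ∈ insert (a, i) H := Finset.mem_insert_self _ _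
    have hposa : 0 < ε a i := arc_pos hF'for hmem
    have hai : a ≠ i := arc_ne hd hF'for hmem
    have hHsub : H ⊆ insert (a, i) H := Finset.subset_insert _ _
    have hHfor : IsOutForest ε H := isOutForest_subset hF'for hHsub
    have hcardH : H.card + 1 = k := by
      have := Finset.card_insert_of_notMem (hnoH a)
      omega
    have hnF'ib : ¬ RTG (rel (insert (a, i) H)) i b := by
      intro h
      rcases rtg_comparable hF'for.2.1 hjb h with h' | h'
      · exact hij (rtg_no_incoming hF'rootj h')
      · exact hnji h'
    have hnHib : ¬ RTG (rel H) i b := fun h => hnF'ib (rtg_mono hHsub h)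
    have hHjb : RTG (rel H) j b := by
      rcases rtg_insert hjb with h | ⟨-, h2⟩
      · exact h
      · exact absurd h2 hnF'ib
    have hGfor : IsOutForest ε (insert (b, i) H) := isOutForest_insert hHfor hposb hnoH hnHib
    have hcardG : (insert (b, i) H).card = k := by
      rw [Finset.card_insert_of_notMem (hnoH b)]
      exact hcardH
    have hrootjG : ∀ u, (u, j) ∉ insert (b, i) H := by
      intro u hu
      rcases Finset.mem_insert.mp hu with h | h
      · exact hij (Prod.ext_iff.mp h).2.symm
      · exact hF'rootj u (hHsub h)
    have hGji : RTG (rel (insert (b, i) H)) j i :=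
      (rtg_mono (Finset.subset_insert _ _) hHjb).tail (Finset.mem_insert_self _ _)
    have hnGja : ¬ RTG (rel (insert (b, i) H)) j a := by
      intro h
      rcases rtg_insert' hnHib h with h' | ⟨-, h2⟩
      · exact hnji ((rtg_mono hHsub h').tail hmem)
      · exact forest_acyc hF'for i (Relation.TransGen.tail' (rtg_mono hHsub h2) hmem)
    exact ⟨hnoH, ⟨hai, ⟨hGfor, hcardG, hrootjG, hGji⟩, hnGja⟩, hposa⟩
  · rintro ⟨hnoH, ⟨hai, ⟨hGfor, hGcard, hrootjG, hGji⟩, hnGja⟩, hposa⟩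
    have hmemG : (b, i) ∈ insert (b, i) H := Finset.mem_insert_self _ _
    have hposb := arc_pos hGfor hmemG
    have hbi : b ≠ i := arc_ne hd hGfor hmemG
    have hHsubG : H ⊆ insert (b, i) H := Finset.subset_insert _ _
    have hHfor : IsOutForest ε H := isOutForest_subset hGfor hHsubG
    have hcardH : H.card + 1 = k := by
      have := Finset.card_insert_of_notMem (hnoH b)
      omega
    have hGjb : RTG (rel (insert (b, i) H)) j b := by
      rcases Relation.ReflTransGen.cases_tail hGji with he | ⟨c, hjc, hci⟩
      · exact absurd he hij
      · have hc : c = b := by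
          rcases Finset.mem_insert.mp hci with h | h
          · exact (Prod.ext_iff.mp h).1
          · exact absurd h (hnoH c)
        exact hc ▸ hjc
    have hHjb : RTG (rel H) j b := by
      rcases rtg_insert hGjb with h | ⟨h, -⟩ <;> exact h
    have hnHia : ¬ RTG (rel H) i a := by
      intro h
      exact hnGja (hGji.trans (rtg_mono hHsubG h))
    have hF'for : IsOutForest ε (insert (a, i) H) := isOutForest_insert hHfor hposa hnoH hnHia
    have hmemF' : (a, i) ∈ insert (a, i) H := Finset.mem_insert_self _ _
    have hcardF' : (insert (a, i) H).card = k := by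
      rw [Finset.card_insert_of_notMem (hnoH a)]
      exact hcardH
    have hrootjF' : ∀ u, (u, j) ∉ insert (a, i) H := by
      intro u hu
      rcases Finset.mem_insert.mp hu with h | h
      · exact hij (Prod.ext_iff.mp h).2.symm
      · exact hrootjG u (hHsubG h)
    have hF'jb : RTG (rel (insert (a, i) H)) j b := rtg_mono (Finset.subset_insert _ _) hHjb
    have hnF'ji : ¬ RTG (rel (insert (a, i) H)) j i := by
      intro h
      rcases Relation.ReflTransGen.cases_tail h with he | ⟨c, hjc, hci⟩
      · exact hij he
      · have hc : c = a := by
          rcases Finset.mem_insert.mp hci with h' | h'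
          · exact (Prod.ext_iff.mp h').1
          · exact absurd h' (hnoH c)
        subst hc
        rcases rtg_insert' hnHia hjc with h' | ⟨h', -⟩ <;>
          exact hnGja (rtg_mono hHsubG h')
    refine ⟨hnoH, ⟨hbi, ⟨⟨hF'for, hcardF', hrootjF', hF'jb⟩, hnF'ji⟩, ?_⟩, hposb⟩
    push_neg
    exact ⟨a, hmemF'⟩

end Forests

section Recur

variable {ε : Fin n → Fin n → ℝ}

lemma sigmaW_eq (ε : Fin n → Fin n → ℝ) (k : ℕ) : sigmaW ε k = wsum ε (Fset ε k) :=
  finsum_mem_eq _ _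

lemma QMat_eq (ε : Fin n → Fin n → ℝ) (k : ℕ) (i j : Fin n) :
    QMat ε k i j = wsum ε (Qset ε k i j) :=
  finsum_mem_eq _ _

variable [NeZero n]

lemma recur_diag (hnn : ∀ a b, 0 ≤ ε a b) (hd : ∀ a, ε a a = 0) (k : ℕ) (j : Fin n) :
    QMat ε (k + 1) j j +
      ((∑ q ∈ Finset.univ.filter (fun q => ¬ q = j), ε q j) * QMat ε k j j
        + ∑ p ∈ Finset.univ.filter (fun p => ¬ p = j), -(ε p j) * QMat ε k p j)
      = sigmaW ε (k + 1) := by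
  classical
  set W : Fin n → Set (Arcs n) := fun p => {F | F ∈ Qset ε k j j ∧ ¬ RTG (rel F) j p}
    with hW
  -- σ_{k+1} = Q_{k+1}(j,j) + (incoming part)
  have hstep1 : sigmaW ε (k + 1) = QMat ε (k + 1) j j
      + wsum ε {F | F ∈ Fset ε (k + 1) ∧ ¬ (∀ u, (u, j) ∉ F)} := by
    rw [sigmaW_eq, wsum_split ε (Fset ε (k + 1)) (fun F => ∀ u, (u, j) ∉ F),
      QMat_eq, wsum_congr ε (E3 ε (k + 1) j)]
  -- incoming part = Σ_p ε p j * wsum (W p)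
  have hstep2 : wsum ε {F | F ∈ Fset ε (k + 1) ∧ ¬ (∀ u, (u, j) ∉ F)}
      = ∑ p ∈ Finset.univ.filter (fun p => ¬ p = j), ε p j * wsum ε (W p) := by
    rw [wsum_remove ε j _ ?_]
    · rw [sum_wsum_eq_wsumP ε j (fun p => ¬ p = j) W,
        wsumP_pos_trim ε hnn j {x | ¬ x.1 = j ∧ x.2 ∈ W x.1}]
      apply wsumP_congr
      have := E4 hd k j
      convert this using 2
    · rintro F ⟨⟨hFor, -⟩, hnr⟩
      push_neg at hnr
      exact forest_existsUnique_incoming hFor hnr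
  -- per-p splitting of Q_k(j,j)
  have hsplitQ : ∀ p : Fin n, QMat ε k j j = QMat ε k p j + wsum ε (W p) := by
    intro p
    rw [QMat_eq ε k j j, wsum_split ε (Qset ε k j j) (fun F => RTG (rel F) j p),
      QMat_eq ε k p j, wsum_congr ε (E2 ε k p j)]
  have hsum : ∑ q ∈ Finset.univ.filter (fun q => ¬ q = j), ε q j * QMat ε k j j
      = ∑ q ∈ Finset.univ.filter (fun q => ¬ q = j),
          (ε q j * QMat ε k q j + ε q j * wsum ε (W q)) := by
    refine Finset.sum_congr rfl fun q _ => ?_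
    rw [hsplitQ q, mul_add]
  rw [hstep1, hstep2, Finset.sum_mul] at *
  rw [hsum, Finset.sum_add_distrib]
  have : ∀ q ∈ Finset.univ.filter (fun q : Fin n => ¬ q = j),
      -(ε q j) * QMat ε k q j = -(ε q j * QMat ε k q j) := fun q _ => by ring
  rw [Finset.sum_congr rfl this, Finset.sum_neg_distrib]
  ring

lemma recur_offdiag (hnn : ∀ a b, 0 ≤ ε a b) (hd : ∀ a, ε a a = 0) (k : ℕ)
    {i j : Fin n} (hij : i ≠ j) :
    QMat ε (k + 1) i j +
      ((∑ q ∈ Finset.univ.filter (fun q => ¬ q = i), ε q i) * QMat ε k i j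
        + ∑ p ∈ Finset.univ.filter (fun p => ¬ p = i), -(ε p i) * QMat ε k p j)
      = 0 := by
  classical
  -- the three families
  set A : Fin n → Set (Arcs n) := fun p => {F | F ∈ Qset ε k p j ∧ RTG (rel F) j i} with hA
  set V2 : Fin n → Set (Arcs n) := fun p => {F | F ∈ Qset ε k p j ∧ ¬ RTG (rel F) j i}
    with hV2
  set W : Fin n → Set (Arcs n) := fun q => {F | F ∈ Qset ε k i j ∧ ¬ RTG (rel F) j q}
    with hWd
  set U : Fin n → Set (Arcs n) :=
    fun p => {F | (F ∈ Qset ε k p j ∧ ¬ RTG (rel F) j i) ∧ (∀ u, (u, i) ∉ F)} with hU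
  set V : Fin n → Set (Arcs n) :=
    fun p => {F | (F ∈ Qset ε k p j ∧ ¬ RTG (rel F) j i) ∧ ¬ (∀ u, (u, i) ∉ F)} with hV
  -- split Q_k(p, j) and Q_k(i, j)
  have hsplit1 : ∀ p : Fin n, QMat ε k p j = wsum ε (A p) + wsum ε (V2 p) := by
    intro p
    rw [QMat_eq ε k p j, wsum_split ε (Qset ε k p j) (fun F => RTG (rel F) j i)]
  have hsplit2 : ∀ p : Fin n, QMat ε k i j = wsum ε (A p) + wsum ε (W p) := by
    intro p
    rw [QMat_eq ε k i j, wsum_split ε (Qset ε k i j) (fun F => RTG (rel F) j p)]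
    rw [wsum_congr ε (E1 ε k p i j).symm]
  have hsplit3 : ∀ p : Fin n, wsum ε (V2 p) = wsum ε (U p) + wsum ε (V p) := by
    intro p
    rw [wsum_split ε (V2 p) (fun F => ∀ u, (u, i) ∉ F)]
    rfl
  -- the U part equals Q_{k+1}(i, j)
  have hUQ : ∑ p ∈ Finset.univ.filter (fun p => ¬ p = i), ε p i * wsum ε (U p)
      = QMat ε (k + 1) i j := by
    rw [sum_wsum_eq_wsumP ε i (fun p => ¬ p = i) U,
      wsumP_pos_trim ε hnn i {x | ¬ x.1 = i ∧ x.2 ∈ U x.1},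
      QMat_eq ε (k + 1) i j, wsum_remove ε i (Qset ε (k + 1) i j) ?_]
    · symm
      apply wsumP_congr
      have := E5 hd k hij
      convert this using 2
    · rintro F ⟨hFor, -, -, hreach⟩
      exact forest_existsUnique_incoming hFor (exists_incoming hreach hij)
  -- the V part equals the W part (the swap bijection)
  have hVW : ∑ p ∈ Finset.univ.filter (fun p => ¬ p = i), ε p i * wsum ε (V p)
      = ∑ q ∈ Finset.univ.filter (fun q => ¬ q = i), ε q i * wsum ε (W q) := by
    rw [sum_wsum_eq_wsumP ε i (fun p => ¬ p = i) V,
      sum_wsum_eq_wsumP ε i (fun q => ¬ q = i) W,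
      wsumP_pos_trim ε hnn i {x | ¬ x.1 = i ∧ x.2 ∈ V x.1},
      wsumP_pos_trim ε hnn i {x | ¬ x.1 = i ∧ x.2 ∈ W x.1}]
    rw [wsumP_remove ε i _ ?_, wsumP_remove ε i _ ?_]
    · rw [wsumPP_swap]
      apply congrArg
      have := E8 hd k hij
      convert this using 2
    · rintro x ⟨⟨-, ⟨hFor, -, -, hreach⟩, -⟩, -⟩
      exact forest_existsUnique_incoming hFor (exists_incoming hreach hij)
    · rintro x ⟨⟨-, ⟨⟨hFor, -, -, -⟩, -⟩, hninc⟩, -⟩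
      push_neg at hninc
      exact forest_existsUnique_incoming hFor hninc
  -- now assemble
  have h1 : ∑ p ∈ Finset.univ.filter (fun p => ¬ p = i), ε p i * QMat ε k p j
      = ∑ p ∈ Finset.univ.filter (fun p => ¬ p = i), ε p i * wsum ε (A p)
        + (QMat ε (k + 1) i j
            + ∑ p ∈ Finset.univ.filter (fun p => ¬ p = i), ε p i * wsum ε (W p)) := by
    rw [← hUQ, ← hVW, ← Finset.sum_add_distrib, ← Finset.sum_add_distrib]
    refine Finset.sum_congr rfl fun p _ => ?_
    rw [hsplit1 p, hsplit3 p]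
    ring
  have h2 : (∑ q ∈ Finset.univ.filter (fun q => ¬ q = i), ε q i) * QMat ε k i j
      = ∑ p ∈ Finset.univ.filter (fun p => ¬ p = i), ε p i * wsum ε (A p)
        + ∑ p ∈ Finset.univ.filter (fun p => ¬ p = i), ε p i * wsum ε (W p) := by
    rw [Finset.sum_mul, ← Finset.sum_add_distrib]
    refine Finset.sum_congr rfl fun p _ => ?_
    rw [hsplit2 p]
    ring
  have h3 : ∑ p ∈ Finset.univ.filter (fun p => ¬ p = i), -(ε p i) * QMat ε k p j
      = -∑ p ∈ Finset.univ.filter (fun p => ¬ p = i), ε p i * QMat ε k p j := by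
    rw [← Finset.sum_neg_distrib]
    exact Finset.sum_congr rfl fun p _ => by ring
  rw [h2, h3, h1]
  ring

lemma recur_entry (hnn : ∀ a b, 0 ≤ ε a b) (hd : ∀ a, ε a a = 0) (k : ℕ) :
    QMat ε (k + 1) + kirchhoff ε * QMat ε k
      = sigmaW ε (k + 1) • (1 : Matrix (Fin n) (Fin n) ℝ) := by
  classical
  ext i j
  rw [Matrix.add_apply, Matrix.mul_apply, Matrix.smul_apply, Matrix.one_apply]
  have hsplit : ∑ p : Fin n, kirchhoff ε i p * QMat ε k p j
      = (∑ q ∈ Finset.univ.filter (fun q => ¬ q = i), ε q i) * QMat ε k i j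
        + ∑ p ∈ Finset.univ.filter (fun p => ¬ p = i), -(ε p i) * QMat ε k p j := by
    rw [← Finset.sum_filter_add_sum_filter_not Finset.univ (fun p => p = i)]
    congr 1
    · rw [Finset.filter_eq', if_pos (Finset.mem_univ i), Finset.sum_singleton]
      have : kirchhoff ε i i = ∑ q ∈ Finset.univ.filter (· ≠ i), ε q i := by
        simp [kirchhoff]
      rw [this]
    · refine Finset.sum_congr rfl fun p hp => ?_
      have hpi : ¬ p = i := by
        simpa using (Finset.mem_filter.mp hp).2
      have : kirchhoff ε i p = -(ε p i) := by
        simp [kirchhoff, Ne.symm hpi, fun h : i = p => hpi h.symm]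
      rw [this]
  rw [hsplit]
  by_cases h : i = j
  · subst h
    rw [if_pos rfl, smul_eq_mul, mul_one]
    exact recur_diag hnn hd k i
  · rw [if_neg h, smul_eq_mul, mul_zero]
    exact recur_offdiag hnn hd k h

end Recur

section Poly

variable {ε : Fin n → Fin n → ℝ}

lemma sigma_zero : sigmaW ε 0 = 1 := by
  have h : Fset ε 0 = {(∅ : Arcs n)} := by
    ext F
    simp only [Fset, Set.mem_setOf_eq, Set.mem_singleton_iff, Finset.card_eq_zero]
    constructor
    · rintro ⟨-, h⟩; exact h
    · rintro rfl; exact ⟨isOutForest_empty, rfl⟩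
  rw [sigmaW_eq, wsum_congr ε h, wsum_singleton_empty]

lemma sigma_nonneg (k : ℕ) : 0 ≤ sigmaW ε k := by
  rw [sigmaW_eq]
  exact wsum_nonneg ε _ (fun F hF => hF.1)

lemma QMat_zero : QMat ε 0 = (1 : Matrix (Fin n) (Fin n) ℝ) := by
  ext i j
  rw [QMat_eq, Matrix.one_apply]
  by_cases h : i = j
  · subst h
    rw [if_pos rfl]
    have hq : Qset ε 0 i i = {(∅ : Arcs n)} := by
      ext F
      simp only [Qset, Set.mem_setOf_eq, Set.mem_singleton_iff, Finset.card_eq_zero]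
      constructor
      · rintro ⟨-, h, -, -⟩; exact h
      · rintro rfl
        exact ⟨isOutForest_empty, rfl, fun u h => (Finset.notMem_empty _ h), .refl⟩
    rw [wsum_congr ε hq, wsum_singleton_empty]
  · rw [if_neg h]
    have hq : Qset ε 0 i j = (∅ : Set (Arcs n)) := by
      ext F
      simp only [Qset, Set.mem_setOf_eq, Set.mem_empty_iff_false, iff_false, not_and,
        Finset.card_eq_zero]
      rintro - rfl hroot hr
      exact h (rtg_no_incoming (fun u hu => Finset.notMem_empty _ hu) hr).symm
    rw [wsum_congr ε hq, wsum_empty]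

lemma card_le_max {F : Arcs n} (hF : IsOutForest ε F) : F.card ≤ maxForestCard ε := by
  apply le_csSup ⟨Fintype.card (Fin n × Fin n), ?_⟩ (⟨F, hF, rfl⟩ :
    F.card ∈ {k | ∃ F : Arcs n, IsOutForest ε F ∧ F.card = k})
  rintro k ⟨G, -, rfl⟩
  exact Finset.card_le_univ G

lemma sigma_succ_max : sigmaW ε (maxForestCard ε + 1) = 0 := by
  have h : Fset ε (maxForestCard ε + 1) = (∅ : Set (Arcs n)) := by
    ext F
    simp only [Fset, Set.mem_setOf_eq, Set.mem_empty_iff_false, iff_false, not_and]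
    intro hF hc
    have := card_le_max hF
    omega
  rw [sigmaW_eq, wsum_congr ε h, wsum_empty]

lemma QMat_succ_max : QMat ε (maxForestCard ε + 1) = 0 := by
  ext i j
  have h : Qset ε (maxForestCard ε + 1) i j = (∅ : Set (Arcs n)) := by
    ext F
    simp only [Qset, Set.mem_setOf_eq, Set.mem_empty_iff_false, iff_false, not_and]
    intro hF hc
    have := card_le_max hF
    omega
  rw [QMat_eq, wsum_congr ε h, wsum_empty, Matrix.zero_apply]

variable [NeZero n]

lemma QMat_poly (hnn : ∀ a b, 0 ≤ ε a b) (hd : ∀ a, ε a a = 0) (k : ℕ) :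
    QMat ε k = ∑ j ∈ Finset.range (k + 1),
      sigmaW ε j • (-(kirchhoff ε)) ^ (k - j) := by
  induction k with
  | zero => simp [QMat_zero, sigma_zero]
  | succ k ih =>
    have hrec : QMat ε (k + 1)
        = sigmaW ε (k + 1) • (1 : Matrix (Fin n) (Fin n) ℝ) - kirchhoff ε * QMat ε k :=
      eq_sub_of_add_eq (recur_entry hnn hd k)
    rw [hrec, ih, sub_eq_add_neg, ← neg_mul, Finset.mul_sum]
    have hterm : ∀ j ∈ Finset.range (k + 1),
        -(kirchhoff ε) * (sigmaW ε j • (-(kirchhoff ε)) ^ (k - j))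
          = sigmaW ε j • (-(kirchhoff ε)) ^ (k + 1 - j) := by
      intro j hj
      have hjk : j ≤ k := Nat.lt_succ_iff.mp (Finset.mem_range.mp hj)
      have he : k + 1 - j = (k - j) + 1 := by omega
      rw [he, mul_smul_comm, ← pow_succ']
    rw [Finset.sum_congr rfl hterm, Finset.sum_range_succ
      (fun j => sigmaW ε j • (-(kirchhoff ε)) ^ (k + 1 - j)) (k + 1)]
    rw [Nat.sub_self, pow_zero]
    abel

lemma key_annihilation (hnn : ∀ a b, 0 ≤ ε a b) (hd : ∀ a, ε a a = 0) :
    ∑ j ∈ Finset.range (maxForestCard ε + 1),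
      sigmaW ε j • (-(kirchhoff ε)) ^ (maxForestCard ε + 1 - j) = 0 := by
  set m := maxForestCard ε with hm
  have hrec := recur_entry (ε := ε) hnn hd m
  rw [QMat_succ_max, sigma_succ_max, zero_smul, zero_add] at hrec
  have hLQ : -(kirchhoff ε) * QMat ε m = 0 := by
    rw [neg_mul, hrec, neg_zero]
  rw [← hLQ, QMat_poly hnn hd m, Finset.mul_sum]
  refine Finset.sum_congr rfl fun j hj => ?_
  have hjm : j ≤ m := Nat.lt_succ_iff.mp (Finset.mem_range.mp hj)
  have he : m + 1 - j = (m - j) + 1 := by omega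
  rw [he, mul_smul_comm, ← pow_succ']

end Poly

end FP
end FPsec

/-- `Q(τ) = (I + τL)⁻¹ = s(τ)⁻¹ Σ_{i=0}^{n−v} s_{n−v−i}(τ)·(−τL)^i`,
where `s_k(τ) = Σ_{j=0}^{k} τ^j σ_j`; in particular for `τ = 1`. -/
theorem inv_one_add_smul_kirchhoff_polynomial (n : ℕ) (hn : 1 < n)
    (ε : Fin n → Fin n → ℝ)
    (hnonneg : ∀ i j, 0 ≤ ε i j) (hdiag : ∀ i, ε i i = 0) :
    (∀ τ : ℝ, 0 < τ →
      (1 + τ • kirchhoff ε)⁻¹ =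
        (∑ j ∈ Finset.range (maxForestCard ε + 1), τ ^ j * sigmaW ε j)⁻¹ •
          ∑ i ∈ Finset.range (maxForestCard ε + 1),
            (∑ j ∈ Finset.range (maxForestCard ε - i + 1), τ ^ j * sigmaW ε j) •
              (-(τ • kirchhoff ε)) ^ i) ∧
    (1 + kirchhoff ε)⁻¹ =
      (∑ j ∈ Finset.range (maxForestCard ε + 1), sigmaW ε j)⁻¹ •
        ∑ i ∈ Finset.range (maxForestCard ε + 1),
          (∑ j ∈ Finset.range (maxForestCard ε - i + 1), sigmaW ε j) •
            (-(kirchhoff ε)) ^ i := by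
  haveI : NeZero n := ⟨by omega⟩
  set m := maxForestCard ε with hm
  set L := kirchhoff ε with hL
  have hτ : ∀ τ : ℝ, 0 < τ →
      (1 + τ • L)⁻¹ =
        (∑ j ∈ Finset.range (m + 1), τ ^ j * sigmaW ε j)⁻¹ •
          ∑ i ∈ Finset.range (m + 1),
            (∑ j ∈ Finset.range (m - i + 1), τ ^ j * sigmaW ε j) • (-(τ • L)) ^ i := by
    intro τ hτpos
    set s : ℕ → ℝ := fun k => ∑ j ∈ Finset.range (k + 1), τ ^ j * sigmaW ε j with hs
    set N : Matrix (Fin n) (Fin n) ℝ := -(τ • L) with hN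
    set P : Matrix (Fin n) (Fin n) ℝ := ∑ i ∈ Finset.range (m + 1), s (m - i) • N ^ i
      with hP
    have hNpow : ∀ d : ℕ, N ^ d = (τ ^ d) • (-L) ^ d := by
      intro d
      rw [hN, ← smul_neg, smul_pow]
    -- the key τ-identity
    have keyτ : ∑ i ∈ Finset.range (m + 1),
        (τ ^ (m - i) * sigmaW ε (m - i)) • N ^ (i + 1) = 0 := by
      have hterm : ∀ i ∈ Finset.range (m + 1),
          (τ ^ (m - i) * sigmaW ε (m - i)) • N ^ (i + 1)
            = τ ^ (m + 1) • (sigmaW ε (m - i) • (-L) ^ (m + 1 - (m - i))) := by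
        intro i hi
        have him : i ≤ m := Nat.lt_succ_iff.mp (Finset.mem_range.mp hi)
        have he1 : m + 1 - (m - i) = i + 1 := by omega
        rw [he1, hNpow, smul_smul, smul_smul]
        congr 1
        have he2 : (m - i) + (i + 1) = m + 1 := by omega
        rw [← he2, pow_add]
        ring
      rw [Finset.sum_congr rfl hterm, ← Finset.smul_sum]
      have hrefl : ∑ i ∈ Finset.range (m + 1),
          sigmaW ε (m - i) • (-L) ^ (m + 1 - (m - i))
            = ∑ j ∈ Finset.range (m + 1), sigmaW ε j • (-L) ^ (m + 1 - j) := by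
        have h := Finset.sum_range_reflect
          (fun j => sigmaW ε j • (-L) ^ (m + 1 - j)) (m + 1)
        simpa using h
      rw [hrefl, FP.key_annihilation hnonneg hdiag, smul_zero]
    -- the main product identity
    have hmain : (1 + τ • L) * P = s m • (1 : Matrix (Fin n) (Fin n) ℝ) := by
      have h1N : (1 : Matrix (Fin n) (Fin n) ℝ) + τ • L = 1 - N := by
        rw [hN, sub_neg_eq_add]
      rw [h1N, sub_mul, one_mul, hP, Finset.mul_sum]
      have hterm : ∀ i ∈ Finset.range (m + 1),
          N * (s (m - i) • N ^ i) = s (m - i) • N ^ (i + 1) := by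
        intro i _
        rw [mul_smul_comm, ← pow_succ']
      rw [Finset.sum_congr rfl hterm]
      have hgoal : (∑ i ∈ Finset.range (m + 1), s (m - i) • N ^ i)
          - (∑ i ∈ Finset.range (m + 1), s (m - i) • N ^ (i + 1))
          = s m • 1 - ∑ i ∈ Finset.range (m + 1),
              (τ ^ (m - i) * sigmaW ε (m - i)) • N ^ (i + 1) := by
        rw [Finset.sum_range_succ' (fun i => s (m - i) • N ^ i) m,
          Finset.sum_range_succ (fun i => s (m - i) • N ^ (i + 1)) m,
          Finset.sum_range_succ (fun i => (τ ^ (m - i) * sigmaW ε (m - i)) • N ^ (i + 1)) m]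
        have hterm2 : ∀ i ∈ Finset.range m,
            s (m - (i + 1)) • N ^ (i + 1)
              = s (m - i) • N ^ (i + 1) - (τ ^ (m - i) * sigmaW ε (m - i)) • N ^ (i + 1) := by
          intro i hi
          have him : i < m := Finset.mem_range.mp hi
          have he : m - i = (m - (i + 1)) + 1 := by omega
          have hss : s (m - i) = s (m - (i + 1)) + τ ^ (m - i) * sigmaW ε (m - i) := by
            rw [he]
            exact Finset.sum_range_succ (fun j => τ ^ j * sigmaW ε j) ((m - (i + 1)) + 1)
          rw [hss, add_smul]
          abel
        rw [Finset.sum_congr rfl hterm2, Finset.sum_sub_distrib]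
        have h00 : s (m - 0) = s m := by rw [Nat.sub_zero]
        have h01 : s (m - m) = s 0 := by rw [Nat.sub_self]
        have h02 : τ ^ (m - m) * sigmaW ε (m - m) = s 0 := by
          rw [Nat.sub_self, hs]
          simp [Finset.sum_range_one]
        rw [h00, h01, h02, pow_zero]
        abel
      rw [hgoal, keyτ, sub_zero]
    -- positivity of s m
    have hs_pos : 0 < s m := by
      rw [hs]
      apply Finset.sum_pos' (fun j _ => mul_nonneg (le_of_lt (pow_pos hτpos j))
        (FP.sigma_nonneg j))
      refine ⟨0, Finset.mem_range.mpr (Nat.succ_pos m), ?_⟩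
      simp [FP.sigma_zero]
    have hs_ne : s m ≠ 0 := ne_of_gt hs_pos
    apply Matrix.inv_eq_right_inv
    rw [Matrix.mul_smul, hmain, smul_smul, inv_mul_cancel₀ hs_ne, one_smul]
  refine ⟨hτ, ?_⟩
  have h1 := hτ 1 one_pos
  simpa using h1
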